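/- Example 6.5 (weak eigenfunction with n nodal domains for a singular measure): Let n ≥ 1, Ω = (0,2n) × (−1,1) ⊂ ℝ², and define u : Ω → ℝ by u(x,y) = (−1)^{i−1} ( 1 + |(x − (2i−1)) y| − |x − (2i−1)| − |y| ) whenever 2(i−1) ≤ x ≤ 2i, for i = 1, …, n (the formulas for consecutive i agree, both vanishing, on the lines x = 2i). Then for every smooth function φ : ℝ² → ℝ with compact support contained in Ω, −∫∫_Ω u(x,y) Δφ(x,y) dx dy = 2 [ ∫_{0}^{2n} u(x,0) φ(x,0) dx + ∑_{i=1}^{n} ∫_{−1}^{1} u(2i−1, y) φ(2i−1, y) dy ], where Δφ = ∂²φ/∂x² + ∂²φ/∂y² and dx dy is two-dimensional Lebesgue measure. (This states that u is a weak eigenfunction with eigenvalue 2 of −Δ_μ for μ = μ₀ + μ₁ + ⋯ + μ_n, the sum of one-dimensional Lebesgue measures on [0,2n]×{0} and on the segments {2i−1}×[−1,1], i = 1, …, n.) -/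

import Mathlib

open MeasureTheory Set

/-- The classical Laplacian `Δφ = ∂²φ/∂x² + ∂²φ/∂y²` of `φ : ℝ × ℝ → ℝ`. -/
noncomputable def lap2 (φ : ℝ × ℝ → ℝ) (p : ℝ × ℝ) : ℝ :=
  deriv (fun x => deriv (fun x' => φ (x', p.2)) x) p.1 +
    deriv (fun y => deriv (fun y' => φ (p.1, y')) y) p.2

namespace Ex65

open intervalIntegral

/-! ### One-dimensional integration by parts lemmas -/

lemma ibp_affine (ψ : ℝ → ℝ) (hψ : ContDiff ℝ (⊤:ℕ∞) ψ) (m q a b : ℝ) :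
    ∫ x in a..b, (m * x + q) * deriv (deriv ψ) x
      = (m * b + q) * deriv ψ b - (m * a + q) * deriv ψ a - m * (ψ b - ψ a) := by
  have hd1 : Differentiable ℝ ψ := hψ.differentiable (by simp)
  have hψ' : ContDiff ℝ (⊤:ℕ∞) (deriv ψ) := (contDiff_infty_iff_deriv.mp hψ).2
  have hd2 : Differentiable ℝ (deriv ψ) := hψ'.differentiable (by simp)
  have hc2 : Continuous (deriv (deriv ψ)) := (contDiff_infty_iff_deriv.mp hψ').2.continuous
  have h1 : ∀ x ∈ uIcc a b, HasDerivAt (fun x => m * x + q) m x := by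
    intro x _
    simpa using ((hasDerivAt_id x).const_mul m).add_const q
  have h2 : ∀ x ∈ uIcc a b, HasDerivAt (deriv ψ) (deriv (deriv ψ) x) x :=
    fun x _ => (hd2 x).hasDerivAt
  have key := intervalIntegral.integral_mul_deriv_eq_deriv_mul h1 h2
    (intervalIntegrable_const) (hc2.intervalIntegrable a b)
  have h3 : ∫ x in a..b, m * deriv ψ x = m * (ψ b - ψ a) := by
    rw [intervalIntegral.integral_const_mul,
      intervalIntegral.integral_deriv_eq_sub (fun x _ => hd1 x)
        ((hψ'.continuous).intervalIntegrable a b)]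
  rw [key, h3]

lemma tent_ibp (ψ : ℝ → ℝ) (hψ : ContDiff ℝ (⊤:ℕ∞) ψ) (c : ℝ) :
    ∫ x in (c-1)..(c+1), (1 - |x - c|) * deriv (deriv ψ) x
      = ψ (c-1) + ψ (c+1) - 2 * ψ c := by
  have hc2 : Continuous (deriv (deriv ψ)) := by
    have hψ' : ContDiff ℝ (⊤:ℕ∞) (deriv ψ) := (contDiff_infty_iff_deriv.mp hψ).2
    exact (contDiff_infty_iff_deriv.mp hψ').2.continuous
  have hint : Continuous fun x => (1 - |x - c|) * deriv (deriv ψ) x :=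
    (continuous_const.sub (continuous_id.sub continuous_const).abs).mul hc2
  have hsplit := intervalIntegral.integral_add_adjacent_intervals
    (a := c - 1) (b := c) (c := c + 1) (μ := volume)
    (f := fun x => (1 - |x - c|) * deriv (deriv ψ) x)
    (hint.intervalIntegrable _ _) (hint.intervalIntegrable _ _)
  rw [← hsplit]
  have e1 : ∫ x in (c-1)..c, (1 - |x - c|) * deriv (deriv ψ) x
      = ∫ x in (c-1)..c, (1 * x + (1 - c)) * deriv (deriv ψ) x := by
    apply intervalIntegral.integral_congr
    intro x hx
    rw [uIcc_of_le (by linarith)] at hx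
    have : |x - c| = -(x - c) := abs_of_nonpos (by linarith [hx.2])
    beta_reduce; rw [this]; ring_nf
  have e2 : ∫ x in c..(c+1), (1 - |x - c|) * deriv (deriv ψ) x
      = ∫ x in c..(c+1), ((-1) * x + (1 + c)) * deriv (deriv ψ) x := by
    apply intervalIntegral.integral_congr
    intro x hx
    rw [uIcc_of_le (by linarith)] at hx
    have : |x - c| = x - c := abs_of_nonneg (by linarith [hx.1])
    beta_reduce; rw [this]; ring_nf
  rw [e1, e2, ibp_affine ψ hψ, ibp_affine ψ hψ]
  ring_nf

/-! ### Partial derivatives of smooth functions on `ℝ × ℝ` -/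

noncomputable def P1 (φ : ℝ × ℝ → ℝ) : ℝ × ℝ → ℝ := fun p => fderiv ℝ φ p (1, 0)
noncomputable def P2 (φ : ℝ × ℝ → ℝ) : ℝ × ℝ → ℝ := fun p => fderiv ℝ φ p (0, 1)

lemma contDiff_P1 {φ : ℝ × ℝ → ℝ} (hφ : ContDiff ℝ (⊤:ℕ∞) φ) : ContDiff ℝ (⊤:ℕ∞) (P1 φ) :=
  (hφ.fderiv_right (by exact_mod_cast le_top)).clm_apply contDiff_const
lemma contDiff_P2 {φ : ℝ × ℝ → ℝ} (hφ : ContDiff ℝ (⊤:ℕ∞) φ) : ContDiff ℝ (⊤:ℕ∞) (P2 φ) :=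
  (hφ.fderiv_right (by exact_mod_cast le_top)).clm_apply contDiff_const

lemma deriv_slice1 {φ : ℝ × ℝ → ℝ} (hφ : ContDiff ℝ (⊤:ℕ∞) φ) (x y : ℝ) :
    deriv (fun x' => φ (x', y)) x = P1 φ (x, y) := by
  have h : HasDerivAt (fun x' => φ (x', y)) (fderiv ℝ φ (x, y) (1, 0)) x := by
    have hg : HasDerivAt (fun x' : ℝ => (x', y)) ((1:ℝ), (0:ℝ)) x :=
      (hasDerivAt_id x).prodMk (hasDerivAt_const x y)
    exact ((hφ.differentiable (by simp) (x, y)).hasFDerivAt).comp_hasDerivAt x hg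
  exact h.deriv

lemma deriv_slice2 {φ : ℝ × ℝ → ℝ} (hφ : ContDiff ℝ (⊤:ℕ∞) φ) (x y : ℝ) :
    deriv (fun y' => φ (x, y')) y = P2 φ (x, y) := by
  have h : HasDerivAt (fun y' => φ (x, y')) (fderiv ℝ φ (x, y) (0, 1)) y := by
    have hg : HasDerivAt (fun y' : ℝ => (x, y')) ((0:ℝ), (1:ℝ)) y :=
      (hasDerivAt_const y x).prodMk (hasDerivAt_id y)
    exact ((hφ.differentiable (by simp) (x, y)).hasFDerivAt).comp_hasDerivAt y hg
  exact h.deriv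

lemma term1_eq {φ : ℝ × ℝ → ℝ} (hφ : ContDiff ℝ (⊤:ℕ∞) φ) (x y : ℝ) :
    deriv (deriv (fun x' => φ (x', y))) x = P1 (P1 φ) (x, y) := by
  have h1 : deriv (fun x' => φ (x', y)) = fun x' => P1 φ (x', y) := by
    funext x'; exact deriv_slice1 hφ x' y
  rw [h1, deriv_slice1 (contDiff_P1 hφ) x y]

lemma term2_eq {φ : ℝ × ℝ → ℝ} (hφ : ContDiff ℝ (⊤:ℕ∞) φ) (x y : ℝ) :
    deriv (deriv (fun y' => φ (x, y'))) y = P2 (P2 φ) (x, y) := by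
  have h1 : deriv (fun y' => φ (x, y')) = fun y' => P2 φ (x, y') := by
    funext y'; exact deriv_slice2 hφ x y'
  rw [h1, deriv_slice2 (contDiff_P2 hφ) x y]

lemma lap2_eq {φ : ℝ × ℝ → ℝ} (hφ : ContDiff ℝ (⊤:ℕ∞) φ) (p : ℝ × ℝ) :
    lap2 φ p = P1 (P1 φ) p + P2 (P2 φ) p := by
  simp only [lap2]
  rw [show (fun x => deriv (fun x' => φ (x', p.2)) x) = deriv (fun x' => φ (x', p.2)) from rfl]
  rw [show (fun y => deriv (fun y' => φ (p.1, y')) y) = deriv (fun y' => φ (p.1, y')) from rfl]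
  rw [term1_eq hφ p.1 p.2, term2_eq hφ p.1 p.2]

lemma tsupport_P1 {φ : ℝ × ℝ → ℝ} : tsupport (P1 φ) ⊆ tsupport φ := by
  apply closure_minimal _ (isClosed_closure)
  intro p hp
  have : fderiv ℝ φ p ≠ 0 := by
    intro h; apply hp; simp [P1, h]
  exact support_fderiv_subset ℝ this

lemma tsupport_P2 {φ : ℝ × ℝ → ℝ} : tsupport (P2 φ) ⊆ tsupport φ := by
  apply closure_minimal _ (isClosed_closure)
  intro p hp
  have : fderiv ℝ φ p ≠ 0 := by
    intro h; apply hp; simp [P2, h]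
  exact support_fderiv_subset ℝ this

/-! ### The triangle wave and the tent factorization -/

noncomputable def ffn (n : ℕ) : ℝ → ℝ := fun x =>
  ∑ i ∈ Finset.Icc 1 n, (-1:ℝ)^(i-1) * max 0 (1 - |x - (2*(i:ℝ)-1)|)

lemma ffn_cont (n : ℕ) : Continuous (ffn n) := by
  apply continuous_finset_sum
  intro i _
  exact continuous_const.mul (continuous_const.max
    (continuous_const.sub (continuous_id.sub continuous_const).abs))

lemma ffn_strip {n i : ℕ} (h1 : 1 ≤ i) (h2 : i ≤ n) {x : ℝ}
    (hx1 : 2*(i:ℝ) - 2 ≤ x) (hx2 : x ≤ 2*(i:ℝ)) :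
    ffn n x = (-1:ℝ)^(i-1) * (1 - |x - (2*(i:ℝ)-1)|) := by
  unfold ffn
  rw [Finset.sum_eq_single i]
  · have ha : |x - (2*(i:ℝ)-1)| ≤ 1 := abs_le.mpr ⟨by linarith, by linarith⟩
    rw [max_eq_right (by linarith)]
  · intro j hj hji
    rw [Finset.mem_Icc] at hj
    have : (1:ℝ) ≤ |x - (2*(j:ℝ)-1)| := by
      rcases lt_or_gt_of_ne hji with h | h
      · have hji' : (j:ℝ) + 1 ≤ (i:ℝ) := by exact_mod_cast h
        rw [abs_of_nonneg (by linarith)]; linarith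
      · have hji' : (i:ℝ) + 1 ≤ (j:ℝ) := by exact_mod_cast h
        rw [abs_of_nonpos (by linarith)]; linarith
    rw [max_eq_left (by linarith), mul_zero]
  · intro h
    exact absurd (Finset.mem_Icc.mpr ⟨h1, h2⟩) h

lemma tele (h : ℕ → ℝ) (n : ℕ) :
    ∑ k ∈ Finset.range n, (-1:ℝ)^k * (h k + h (k+1)) = h 0 - (-1:ℝ)^n * h n := by
  induction n with
  | zero => simp
  | succ n ih =>
    rw [Finset.sum_range_succ, ih, pow_succ]
    ring

lemma u_factor {n : ℕ} (hn : 1 ≤ n) (u : ℝ × ℝ → ℝ)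
    (hu : ∀ i : ℕ, 1 ≤ i → i ≤ n → ∀ p : ℝ × ℝ,
      p ∈ Ioo (0 : ℝ) (2 * n) ×ˢ Ioo (-1 : ℝ) 1 →
      2 * ((i : ℝ) - 1) ≤ p.1 → p.1 ≤ 2 * (i : ℝ) →
      u p = (-1 : ℝ) ^ (i - 1) *
        (1 + |(p.1 - (2 * (i : ℝ) - 1)) * p.2| - |p.1 - (2 * (i : ℝ) - 1)| - |p.2|))
    {p : ℝ × ℝ} (hp : p ∈ Ioo (0 : ℝ) (2 * n) ×ˢ Ioo (-1 : ℝ) 1) :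
    u p = ffn n p.1 * (1 - |p.2|) := by
  have hx0 := hp.1.1
  have hxn := hp.1.2
  set x := p.1 with hx
  set k : ℤ := ⌊x / 2⌋ with hk
  have hk0 : 0 ≤ k := Int.floor_nonneg.mpr (by linarith)
  have hkx : (k:ℝ) ≤ x / 2 := Int.floor_le _
  have hxk : x / 2 < (k:ℝ) + 1 := Int.lt_floor_add_one _
  set i : ℕ := k.toNat + 1 with hi
  have hic : (i:ℝ) = (k:ℝ) + 1 := by
    have h' : ((k.toNat : ℤ) : ℝ) = (k:ℝ) := by rw [Int.toNat_of_nonneg hk0]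
    push_cast [hi] at h' ⊢
    linarith
  have h1 : 1 ≤ i := Nat.le_add_left 1 _
  have h2 : i ≤ n := by
    by_contra hcon
    push_neg at hcon
    have : (n:ℝ) + 1 ≤ (i:ℝ) := by exact_mod_cast hcon
    have : (n:ℝ) ≤ (k:ℝ) := by linarith [hic]
    linarith
  have hb1 : 2 * ((i:ℝ) - 1) ≤ x := by rw [hic]; linarith
  have hb2 : x ≤ 2 * (i:ℝ) := by rw [hic]; linarith
  have hb1' : 2 * (i:ℝ) - 2 ≤ x := by linarith
  rw [hu i h1 h2 p hp (by rw [← hx]; exact hb1) (by rw [← hx]; exact hb2),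
    ffn_strip h1 h2 hb1' hb2, abs_mul]
  ring

/-! ### Inner integral evaluations -/

lemma inner_y {n : ℕ} {φ : ℝ × ℝ → ℝ} (hφ : ContDiff ℝ (⊤:ℕ∞) φ)
    (hsupp : tsupport φ ⊆ Ioo (0 : ℝ) (2 * n) ×ˢ Ioo (-1 : ℝ) 1) (x : ℝ) :
    ∫ y, (1 - |y|) * P2 (P2 φ) (x, y) = -2 * φ (x, 0) := by
  have hψ : ContDiff ℝ (⊤:ℕ∞) (fun y => φ (x, y)) :=
    hφ.comp (contDiff_const.prodMk contDiff_id)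
  have hout : ∀ y : ℝ, y ∉ Ioo (-1:ℝ) 1 → (x, y) ∉ tsupport φ := by
    intro y hy hmem
    exact hy (hsupp hmem).2
  have h0 : ∀ y ∉ Ioc (-1:ℝ) 1, (1 - |y|) * P2 (P2 φ) (x, y) = 0 := by
    intro y hy
    have hy' : y ∉ Ioo (-1:ℝ) 1 := fun h => hy (Ioo_subset_Ioc_self h)
    have : P2 (P2 φ) (x, y) = 0 :=
      image_eq_zero_of_notMem_tsupport (fun h => hout y hy' (tsupport_P2 (tsupport_P2 h)))
    rw [this, mul_zero]
  rw [← setIntegral_eq_integral_of_forall_compl_eq_zero h0,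
    ← intervalIntegral.integral_of_le (by norm_num : (-1:ℝ) ≤ 1)]
  have hb : ((0:ℝ) - 1) = -1 := by norm_num
  have hb' : ((0:ℝ) + 1) = 1 := by norm_num
  have key := tent_ibp (fun y => φ (x, y)) hψ 0
  rw [hb, hb'] at key
  have e : ∫ y in (-1:ℝ)..1, (1 - |y|) * P2 (P2 φ) (x, y)
      = ∫ y in (-1:ℝ)..1, (1 - |y - 0|) * deriv (deriv (fun y' => φ (x, y'))) y := by
    apply intervalIntegral.integral_congr
    intro y _
    beta_reduce
    rw [term2_eq hφ x y, sub_zero]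
  rw [e, key]
  have z1 : φ (x, -1) = 0 := image_eq_zero_of_notMem_tsupport (hout (-1) (by simp))
  have z2 : φ (x, 1) = 0 := image_eq_zero_of_notMem_tsupport (hout 1 (by simp))
  rw [z1, z2]; ring

lemma inner_x {n : ℕ} {φ : ℝ × ℝ → ℝ} (hφ : ContDiff ℝ (⊤:ℕ∞) φ)
    (hsupp : tsupport φ ⊆ Ioo (0 : ℝ) (2 * n) ×ˢ Ioo (-1 : ℝ) 1) (y : ℝ) :
    ∫ x, ffn n x * P1 (P1 φ) (x, y)
      = ∑ k ∈ Finset.range n,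
          (-1:ℝ)^k * (φ (2*(k:ℝ), y) + φ (2*(k:ℝ)+2, y) - 2 * φ (2*(k:ℝ)+1, y)) := by
  have hχ : ContDiff ℝ (⊤:ℕ∞) (fun x => φ (x, y)) :=
    hφ.comp (contDiff_id.prodMk contDiff_const)
  have hout : ∀ x : ℝ, x ∉ Ioo (0:ℝ) (2*n) → (x, y) ∉ tsupport φ := by
    intro x hx hmem
    exact hx (hsupp hmem).1
  have h0 : ∀ x ∉ Ioc (0:ℝ) (2*n), ffn n x * P1 (P1 φ) (x, y) = 0 := by
    intro x hx
    have hx' : x ∉ Ioo (0:ℝ) (2*n) := fun h => hx (Ioo_subset_Ioc_self h)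
    have : P1 (P1 φ) (x, y) = 0 :=
      image_eq_zero_of_notMem_tsupport (fun h => hout x hx' (tsupport_P1 (tsupport_P1 h)))
    rw [this, mul_zero]
  have hcont : Continuous (fun x => ffn n x * P1 (P1 φ) (x, y)) :=
    (ffn_cont n).mul ((contDiff_P1 (contDiff_P1 hφ)).continuous.comp
      (continuous_id.prodMk continuous_const))
  have hnn : (0:ℝ) ≤ 2*n := by positivity
  rw [← setIntegral_eq_integral_of_forall_compl_eq_zero h0,
    ← intervalIntegral.integral_of_le hnn]
  have hadj := intervalIntegral.sum_integral_adjacent_intervals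
    (a := fun k : ℕ => 2*(k:ℝ)) (n := n) (μ := volume)
    (f := fun x => ffn n x * P1 (P1 φ) (x, y))
    (fun k _ => hcont.intervalIntegrable _ _)
  beta_reduce at hadj
  simp only [Nat.cast_zero, mul_zero] at hadj
  rw [← hadj]
  apply Finset.sum_congr rfl
  intro k hk
  have hk' : k < n := Finset.mem_range.mp hk
  have e : ∫ x in (2*(k:ℝ))..(2*((k:ℕ)+1:ℕ):ℝ), ffn n x * P1 (P1 φ) (x, y)
      = ∫ x in (2*(k:ℝ))..(2*(k:ℝ)+2),
          ((-1:ℝ)^k * ((1 - |x - (2*(k:ℝ)+1)|) * deriv (deriv (fun x' => φ (x', y))) x)) := by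
    have hc : (2*(((k:ℕ)+1:ℕ)):ℝ) = 2*(k:ℝ)+2 := by push_cast; ring
    rw [hc]
    apply intervalIntegral.integral_congr
    intro x hx
    rw [uIcc_of_le (by linarith)] at hx
    have hs := ffn_strip (i := k+1) (n := n) (Nat.le_add_left 1 k) hk' (x := x)
      (by push_cast; linarith [hx.1]) (by push_cast; linarith [hx.2])
    have hc2 : (2*(((k:ℕ)+1:ℕ)):ℝ) - 1 = 2*(k:ℝ)+1 := by push_cast; ring
    rw [hc2] at hs
    simp only [Nat.add_sub_cancel] at hs
    beta_reduce
    rw [hs, term1_eq hφ x y]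
    ring
  have key := tent_ibp (fun x => φ (x, y)) hχ (2*(k:ℝ)+1)
  rw [show (2*(k:ℝ)+1-1) = 2*(k:ℝ) by ring,
      show (2*(k:ℝ)+1+1) = 2*(k:ℝ)+2 by ring] at key
  rw [e, intervalIntegral.integral_const_mul, key]

end Ex65

open Ex65

/-- Example 6.5: weak eigenfunction with `n` nodal domains for a singular measure
on `(0, 2n) × (−1, 1)`. -/
theorem example_n_nodal_domains_weak_eigenfunction
    (n : ℕ) (hn : 1 ≤ n)
    (u : ℝ × ℝ → ℝ)
    (hu : ∀ i : ℕ, 1 ≤ i → i ≤ n → ∀ p : ℝ × ℝ,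
      p ∈ Ioo (0 : ℝ) (2 * n) ×ˢ Ioo (-1 : ℝ) 1 →
      2 * ((i : ℝ) - 1) ≤ p.1 → p.1 ≤ 2 * (i : ℝ) →
      u p = (-1 : ℝ) ^ (i - 1) *
        (1 + |(p.1 - (2 * (i : ℝ) - 1)) * p.2| - |p.1 - (2 * (i : ℝ) - 1)| - |p.2|))
    (φ : ℝ × ℝ → ℝ) (hφ : ContDiff ℝ (⊤ : ℕ∞) φ) (hφc : HasCompactSupport φ)
    (hφsupp : tsupport φ ⊆ Ioo (0 : ℝ) (2 * n) ×ˢ Ioo (-1 : ℝ) 1) :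
    -(∫ p in Ioo (0 : ℝ) (2 * n) ×ˢ Ioo (-1 : ℝ) 1, u p * lap2 φ p) =
      2 * ((∫ x in (0 : ℝ)..(2 * n), u (x, 0) * φ (x, 0)) +
        ∑ i ∈ Finset.Icc 1 n,
          ∫ y in (-1 : ℝ)..1, u (2 * (i : ℝ) - 1, y) * φ (2 * (i : ℝ) - 1, y)) := by
  have hφ' : ContDiff ℝ (⊤:ℕ∞) φ := hφ.of_le (by simp)
  -- abbreviations
  set vA : ℝ × ℝ → ℝ := fun p => (1 - |p.2|) * (ffn n p.1 * P1 (P1 φ) p) with hvA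
  set vB : ℝ × ℝ → ℝ := fun p => ffn n p.1 * ((1 - |p.2|) * P2 (P2 φ) p) with hvB
  -- continuity and support
  have hcP1 : Continuous (P1 (P1 φ)) := (contDiff_P1 (contDiff_P1 hφ')).continuous
  have hcP2 : Continuous (P2 (P2 φ)) := (contDiff_P2 (contDiff_P2 hφ')).continuous
  have hcontA : Continuous vA :=
    ((continuous_const.sub (continuous_abs.comp continuous_snd))).mul
      (((ffn_cont n).comp continuous_fst).mul hcP1)
  have hcontB : Continuous vB :=
    ((ffn_cont n).comp continuous_fst).mul
      (((continuous_const.sub (continuous_abs.comp continuous_snd))).mul hcP2)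
  have hsuppA : Function.support vA ⊆ tsupport φ := by
    intro p hp
    have : P1 (P1 φ) p ≠ 0 := by
      intro h; apply hp; simp [hvA, h]
    exact tsupport_P1 (tsupport_P1 (subset_closure this))
  have hsuppB : Function.support vB ⊆ tsupport φ := by
    intro p hp
    have : P2 (P2 φ) p ≠ 0 := by
      intro h; apply hp; simp [hvB, h]
    exact tsupport_P2 (tsupport_P2 (subset_closure this))
  have hcsA : HasCompactSupport vA :=
    HasCompactSupport.of_support_subset_isCompact hφc hsuppA
  have hcsB : HasCompactSupport vB :=
    HasCompactSupport.of_support_subset_isCompact hφc hsuppB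
  have hIA : Integrable vA volume := hcontA.integrable_of_hasCompactSupport hcsA
  have hIB : Integrable vB volume := hcontB.integrable_of_hasCompactSupport hcsB
  -- Step 1: rewrite the LHS integral
  have hstep1 : ∫ p in Ioo (0 : ℝ) (2 * n) ×ˢ Ioo (-1 : ℝ) 1, u p * lap2 φ p
      = (∫ p, vA p) + (∫ p, vB p) := by
    rw [setIntegral_congr_fun (measurableSet_Ioo.prod measurableSet_Ioo)
        (g := fun p => vA p + vB p) ?_,
      setIntegral_eq_integral_of_forall_compl_eq_zero ?_, integral_add hIA hIB]
    · intro p hp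
      have hnp : p ∉ tsupport φ := fun h => hp (hφsupp h)
      have h1 : P1 (P1 φ) p = 0 :=
        image_eq_zero_of_notMem_tsupport (fun h => hnp (tsupport_P1 (tsupport_P1 h)))
      have h2 : P2 (P2 φ) p = 0 :=
        image_eq_zero_of_notMem_tsupport (fun h => hnp (tsupport_P2 (tsupport_P2 h)))
      simp [hvA, hvB, h1, h2]
    · intro p hp
      beta_reduce
      rw [u_factor hn u hu hp, lap2_eq hφ' p]
      simp only [hvA, hvB]
      ring
  -- Step 2: the vB integral
  have hB : ∫ p, vB p = -2 * ∫ x in Ioo (0:ℝ) (2*n), ffn n x * φ (x, 0) := by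
    rw [Measure.volume_eq_prod ℝ ℝ] at hIB ⊢
    rw [MeasureTheory.integral_prod vB hIB]
    have e1 : (fun x => ∫ y, vB (x, y)) = fun x => (-2) * (ffn n x * φ (x, 0)) := by
      funext x
      simp only [hvB]
      rw [integral_const_mul, inner_y hφ' hφsupp x]
      ring
    rw [e1, integral_const_mul]
    congr 1
    apply (setIntegral_eq_integral_of_forall_compl_eq_zero ?_).symm
    intro x hx
    have : φ (x, 0) = 0 := image_eq_zero_of_notMem_tsupport
      (fun h => hx (hφsupp h).1)
    rw [this, mul_zero]
  -- Step 3: the vA integral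
  have hA : ∫ p, vA p = ∑ k ∈ Finset.range n,
      ((-2) * (-1:ℝ)^k) * ∫ y in Ioo (-1:ℝ) 1, (1-|y|) * φ (2*(k:ℝ)+1, y) := by
    rw [Measure.volume_eq_prod ℝ ℝ] at hIA ⊢
    rw [MeasureTheory.integral_prod_symm vA hIA]
    have e1 : (fun y => ∫ x, vA (x, y))
        = fun y => ∑ k ∈ Finset.range n,
            ((-2) * (-1:ℝ)^k) * ((1-|y|) * φ (2*(k:ℝ)+1, y)) := by
      funext y
      simp only [hvA]
      rw [integral_const_mul, inner_x hφ' hφsupp y]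
      -- telescoping
      have hz0 : φ (2*((0:ℕ):ℝ), y) = 0 := image_eq_zero_of_notMem_tsupport
        (fun h => by
          have := (hφsupp h).1.1
          norm_num at this)
      have hzn : φ (2*((n:ℕ):ℝ), y) = 0 := image_eq_zero_of_notMem_tsupport
        (fun h => lt_irrefl _ (hφsupp h).1.2)
      have t' : ∑ k ∈ Finset.range n, (-1:ℝ)^k * (φ (2*(k:ℝ), y) + φ (2*(k:ℝ)+2, y)) = 0 := by
        have t := tele (fun k => φ (2*(k:ℝ), y)) n
        beta_reduce at t
        rw [hz0, hzn, show ((0:ℝ) - (-1:ℝ)^n * 0) = 0 by ring] at t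
        rw [← t]
        apply Finset.sum_congr rfl
        intro k _
        have hcast : (2*(((k:ℕ)+1:ℕ)):ℝ) = 2*(k:ℝ)+2 := by push_cast; ring
        rw [hcast]
      have hterm : ∀ k ∈ Finset.range n,
          (1-|y|) * ((-1:ℝ)^k * (φ (2*(k:ℝ), y) + φ (2*(k:ℝ)+2, y) - 2 * φ (2*(k:ℝ)+1, y)))
            = (1-|y|) * ((-1:ℝ)^k * (φ (2*(k:ℝ), y) + φ (2*(k:ℝ)+2, y)))
              + ((-2) * (-1:ℝ)^k) * ((1-|y|) * φ (2*(k:ℝ)+1, y)) := by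
        intro k _
        ring
      rw [Finset.mul_sum, Finset.sum_congr rfl hterm, Finset.sum_add_distrib,
        ← Finset.mul_sum, t', mul_zero, zero_add]
    rw [e1]
    rw [MeasureTheory.integral_finset_sum]
    · apply Finset.sum_congr rfl
      intro k _
      rw [integral_const_mul]
      congr 1
      apply (setIntegral_eq_integral_of_forall_compl_eq_zero ?_).symm
      intro y hy
      have : φ (2*(k:ℝ)+1, y) = 0 := image_eq_zero_of_notMem_tsupport
        (fun h => hy (hφsupp h).2)
      rw [this, mul_zero]
    · intro k _
      apply Continuous.integrable_of_hasCompactSupport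
      · exact continuous_const.mul ((continuous_const.sub continuous_abs).mul
          (hφ'.continuous.comp (continuous_const.prodMk continuous_id)))
      · apply HasCompactSupport.of_support_subset_isCompact isCompact_Icc
        intro y hy
        have hφy : φ (2*(k:ℝ)+1, y) ≠ 0 := by
          intro h; apply hy; simp [h]
        have : (2*(k:ℝ)+1, y) ∈ tsupport φ := subset_closure hφy
        exact Ioo_subset_Icc_self (hφsupp this).2
  -- Step 4: the first RHS term
  have hnn : (0:ℝ) ≤ 2*n := by positivity
  have hR1 : (∫ x in (0:ℝ)..(2*n), u (x, 0) * φ (x, 0))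
      = ∫ x in Ioo (0:ℝ) (2*n), ffn n x * φ (x, 0) := by
    rw [intervalIntegral.integral_of_le hnn, integral_Ioc_eq_integral_Ioo]
    apply setIntegral_congr_fun measurableSet_Ioo
    intro x hx
    have hp : ((x, (0:ℝ))) ∈ Ioo (0 : ℝ) (2 * n) ×ˢ Ioo (-1 : ℝ) 1 :=
      ⟨hx, by norm_num⟩
    beta_reduce
    rw [u_factor hn u hu hp]
    norm_num
  -- Step 5: the RHS sum terms
  have hR2 : ∀ i ∈ Finset.Icc 1 n,
      (∫ y in (-1:ℝ)..1, u (2*(i:ℝ)-1, y) * φ (2*(i:ℝ)-1, y))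
        = (-1:ℝ)^(i-1) * ∫ y in Ioo (-1:ℝ) 1, (1-|y|) * φ (2*(i:ℝ)-1, y) := by
    intro i hi
    obtain ⟨h1, h2⟩ := Finset.mem_Icc.mp hi
    have hi1 : (1:ℝ) ≤ (i:ℝ) := by exact_mod_cast h1
    have hin : (i:ℝ) ≤ (n:ℝ) := by exact_mod_cast h2
    have hn1 : (1:ℝ) ≤ (n:ℝ) := by exact_mod_cast hn
    rw [intervalIntegral.integral_of_le (by norm_num), integral_Ioc_eq_integral_Ioo,
      ← integral_const_mul]
    apply setIntegral_congr_fun measurableSet_Ioo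
    intro y hy
    have hx1 : (0:ℝ) < 2*(i:ℝ)-1 := by linarith
    have hx2 : (2*(i:ℝ)-1) < 2*(n:ℝ) := by linarith
    have hp : ((2*(i:ℝ)-1, y)) ∈ Ioo (0 : ℝ) (2 * n) ×ˢ Ioo (-1 : ℝ) 1 :=
      Set.mk_mem_prod (mem_Ioo.mpr ⟨hx1, hx2⟩) hy
    beta_reduce
    rw [u_factor hn u hu hp]
    have hf := ffn_strip h1 h2 (x := 2*(i:ℝ)-1) (by linarith) (by linarith)
    rw [hf, show ((2*(i:ℝ)-1) - (2*(i:ℝ)-1)) = 0 by ring, abs_zero]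
    ring
  -- Step 6: reindex the RHS sum
  have hreindex : ∑ i ∈ Finset.Icc 1 n,
      (∫ y in (-1:ℝ)..1, u (2*(i:ℝ)-1, y) * φ (2*(i:ℝ)-1, y))
      = ∑ k ∈ Finset.range n,
          (-1:ℝ)^k * ∫ y in Ioo (-1:ℝ) 1, (1-|y|) * φ (2*(k:ℝ)+1, y) := by
    rw [Finset.sum_congr rfl hR2, ← Finset.Ico_add_one_right_eq_Icc, Finset.sum_Ico_eq_sum_range]

    apply Finset.sum_congr rfl
    intro k _
    have e1 : (1 + k) - 1 = k := by omega
    have e2 : (2*((1+k:ℕ):ℝ)-1) = 2*(k:ℝ)+1 := by push_cast; ring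
    rw [e1, e2]
  -- Final assembly
  rw [hstep1, hA, hB, hR1, hreindex]
  have hsum : ∑ k ∈ Finset.range n,
      ((-2) * (-1:ℝ)^k) * ∫ y in Ioo (-1:ℝ) 1, (1-|y|) * φ (2*(k:ℝ)+1, y)
      = (-2) * ∑ k ∈ Finset.range n,
          (-1:ℝ)^k * ∫ y in Ioo (-1:ℝ) 1, (1-|y|) * φ (2*(k:ℝ)+1, y) := by
    rw [Finset.mul_sum]
    apply Finset.sum_congr rfl
    intro k _
    ring
  rw [hsum]
  ring
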